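/- Let 1 < α_D < 2, let F_R be a probability distribution on (0,∞) with ∫_0^∞ r^{α_D} dF_R(r) < ∞, and let m ≥ 1, z_1,…,z_m ∈ ℝ, t_1,…,t_m ≥ 0. Then ∫_{−∞}^{∞} ∫_0^{∞} ∫_0^{∞} min( (Σ_{j=1}^m z_j r L_{t_j}(s,u))^2 , |Σ_{j=1}^m z_j r L_{t_j}(s,u)| ) ds · α_D u^{−(α_D+1)} du · dF_R(r) < ∞. -/

import Mathlib

open MeasureTheory Set
open scoped ENNReal

/-- `L_t(s,u)`: the Lebesgue measure of `[0,t] ∩ [s,s+u]`. -/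
noncomputable def sessLen (t s u : ℝ) : ℝ :=
  (volume (Icc 0 t ∩ Icc s (s + u))).toReal

/-! Put `a = r ∑ⱼ |zⱼ|` and `T = ∑ⱼ tⱼ`. Since `0 ≤ L_t(s,u) ≤ min(u, t)` and `L_t(s,u) = 0`
unless `s ∈ [-u, t]`, the inner sum is bounded by `B = a min(u, T)` and supported in `[-u, T]`;
hence the `s`-integral is at most `min(B², B) (u + T) ≤ 2 T a min(au, 1) u`. Integrating against
`α u^{-(α+1)} du` splits at `u = 1/a`: `∫₀^{1/a} a u^{1-α}` converges because `α < 2` and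
`∫_{1/a}^∞ u^{-α}` because `α > 1`, and both scale like `a^{α-1}`. The `u`-integral is thus
`C a^α = C (∑ⱼ |zⱼ|)^α r^α`, whose `F_R`-integral is finite by the moment assumption. -/

lemma sessLen_nonneg (t s u : ℝ) : 0 ≤ sessLen t s u := ENNReal.toReal_nonneg

lemma sessLen_le_min {t u : ℝ} (ht : 0 ≤ t) (hu : 0 ≤ u) (s : ℝ) :
    sessLen t s u ≤ min u t := by
  refine le_min (ENNReal.toReal_le_of_le_ofReal hu ?_) (ENNReal.toReal_le_of_le_ofReal ht ?_)
  · calc volume (Icc 0 t ∩ Icc s (s + u)) ≤ volume (Icc s (s + u)) :=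
          measure_mono inter_subset_right
      _ = ENNReal.ofReal u := by rw [Real.volume_Icc, add_sub_cancel_left]
  · calc volume (Icc 0 t ∩ Icc s (s + u)) ≤ volume (Icc 0 t) := measure_mono inter_subset_left
      _ = ENNReal.ofReal t := by rw [Real.volume_Icc, sub_zero]

lemma sessLen_eq_zero_of_notMem {t s u : ℝ} (hs : s ∉ Icc (-u) t) : sessLen t s u = 0 := by
  have : Icc 0 t ∩ Icc s (s + u) = ∅ := by
    refine eq_empty_of_forall_notMem fun x ⟨⟨hx0, hxt⟩, hsx, hxu⟩ => hs ⟨?_, ?_⟩ <;> linarith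
  simp [sessLen, this]

lemma lintegral_min_sq_abs_le_of_abs_le {f : ℝ → ℝ} {B a b : ℝ} (hB : ∀ s, |f s| ≤ B)
    (hf : ∀ s ∉ Icc a b, f s = 0) :
    ∫⁻ s, ENNReal.ofReal (min (f s ^ 2) |f s|) ≤ ENNReal.ofReal (min (B ^ 2) B * (b - a)) := by
  have hB0 : 0 ≤ B := (abs_nonneg _).trans (hB 0)
  calc ∫⁻ s, ENNReal.ofReal (min (f s ^ 2) |f s|)
      ≤ ∫⁻ s, (Icc a b).indicator (fun _ => ENNReal.ofReal (min (B ^ 2) B)) s := by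
        refine lintegral_mono fun s => ?_
        by_cases hs : s ∈ Icc a b
        · rw [indicator_of_mem hs, ← sq_abs]
          gcongr
          exacts [hB s, hB s]
        · simp [hf s hs]
    _ = ENNReal.ofReal (min (B ^ 2) B * (b - a)) := by
        rw [lintegral_indicator_const measurableSet_Icc, Real.volume_Icc,
          ENNReal.ofReal_mul (le_min (sq_nonneg B) hB0)]

lemma min_sq_mul_add_le {a u T : ℝ} (ha : 0 ≤ a) (hu : 0 ≤ u) (hT : 0 ≤ T) :
    min ((a * min u T) ^ 2) (a * min u T) * (u + T) ≤ 2 * T * a * (min (a * u) 1 * u) := by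
  have hm0 : 0 ≤ min u T := le_min hu hT
  have hmin : min ((a * min u T) ^ 2) (a * min u T) ≤ a * min u T * min (a * u) 1 := by
    rcases le_total (a * u) 1 with h | h
    · rw [min_eq_left h]
      refine (min_le_left _ _).trans ?_
      have : a * min u T ≤ a * u := mul_le_mul_of_nonneg_left (min_le_left u T) ha
      nlinarith [mul_nonneg ha hm0]
    · rw [min_eq_right h, mul_one]
      exact min_le_right _ _
  have hlen : min u T * (u + T) ≤ 2 * T * u := by
    rcases le_total u T with h | h
    · rw [min_eq_left h]; nlinarith
    · rw [min_eq_right h]; nlinarith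
  calc min ((a * min u T) ^ 2) (a * min u T) * (u + T)
      ≤ a * min u T * min (a * u) 1 * (u + T) := by gcongr
    _ = a * min (a * u) 1 * (min u T * (u + T)) := by ring
    _ ≤ a * min (a * u) 1 * (2 * T * u) := by gcongr
    _ = 2 * T * a * (min (a * u) 1 * u) := by ring

lemma lintegral_Ioi_min_mul_one_mul_rpow {a p : ℝ} (ha : 0 ≤ a) (hp1 : 1 < p) (hp2 : p < 2) :
    ∫⁻ u in Ioi 0, ENNReal.ofReal (min (a * u) 1 * u ^ (-p)) =
      ENNReal.ofReal (a ^ (p - 1) * (1 / (2 - p) + 1 / (p - 1))) := by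
  rcases ha.eq_or_lt with rfl | ha
  · simp [Real.zero_rpow (by linarith : p - 1 ≠ 0)]
  have ha' : 0 < a⁻¹ := inv_pos.2 ha
  have hpow : ∀ x : ℝ, a⁻¹ ^ x = a ^ (-x) := fun x => by
    rw [Real.inv_rpow ha.le, Real.rpow_neg ha.le]
  have near : ∫⁻ u in Ioc 0 a⁻¹, ENNReal.ofReal (min (a * u) 1 * u ^ (-p)) =
      ENNReal.ofReal (a ^ (p - 1) / (2 - p)) := by
    have heq : ∀ u ∈ Ioc 0 a⁻¹, min (a * u) 1 * u ^ (-p) = a * u ^ (1 - p) := by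
      rintro u ⟨hu0, hu⟩
      have hau : a * u ≤ 1 := by
        rw [← mul_inv_cancel₀ ha.ne']
        gcongr
      rw [min_eq_left hau, mul_assoc,
        ← Real.rpow_one_add' hu0.le (by linarith), sub_eq_add_neg]
    have hnn : 0 ≤ᵐ[volume.restrict (Ioc 0 a⁻¹)] fun u => a * u ^ (1 - p) := by
      filter_upwards [ae_restrict_mem measurableSet_Ioc] with u hu
      exact mul_nonneg ha.le (Real.rpow_nonneg hu.1.le _)
    have hint : IntegrableOn (fun u : ℝ => a * u ^ (1 - p)) (Ioc 0 a⁻¹) :=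
      ((intervalIntegral.intervalIntegrable_rpow' (by linarith)).const_mul a).1
    rw [setLIntegral_congr_fun measurableSet_Ioc fun u hu => congrArg ENNReal.ofReal (heq u hu),
      ← ofReal_integral_eq_lintegral_ofReal hint hnn, ← intervalIntegral.integral_of_le ha'.le,
      intervalIntegral.integral_const_mul, integral_rpow (Or.inl (by linarith)),
      Real.zero_rpow (by linarith), hpow, sub_zero, mul_div_assoc',
      ← Real.rpow_one_add' ha.le (by linarith), show 1 + -(1 - p + 1) = p - 1 by ring,
      show 1 - p + 1 = 2 - p by ring]
  have far : ∫⁻ u in Ioi a⁻¹, ENNReal.ofReal (min (a * u) 1 * u ^ (-p)) =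
      ENNReal.ofReal (a ^ (p - 1) / (p - 1)) := by
    have heq : ∀ u ∈ Ioi a⁻¹, min (a * u) 1 * u ^ (-p) = u ^ (-p) := fun u hu => by
      rw [min_eq_right ((inv_lt_iff_one_lt_mul₀' ha).1 hu).le, one_mul]
    have hnn : 0 ≤ᵐ[volume.restrict (Ioi a⁻¹)] fun u => u ^ (-p) := by
      filter_upwards [ae_restrict_mem measurableSet_Ioi] with u hu
      exact Real.rpow_nonneg (ha'.trans hu).le _
    rw [setLIntegral_congr_fun measurableSet_Ioi fun u hu => congrArg ENNReal.ofReal (heq u hu),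
      ← ofReal_integral_eq_lintegral_ofReal (integrableOn_Ioi_rpow_of_lt (by linarith) ha') hnn,
      integral_Ioi_rpow_of_lt (by linarith) ha', hpow, show -p + 1 = -(p - 1) by ring, neg_neg,
      div_neg, neg_div, neg_neg]
  rw [← Ioc_union_Ioi_eq_Ioi ha'.le, lintegral_union measurableSet_Ioi Ioc_disjoint_Ioi_same,
    near, far, ← ENNReal.ofReal_add (by positivity) (div_nonneg (by positivity) (by linarith))]
  congr 1
  ring

section SessionSum

variable {ι : Type*} [Fintype ι] {z t : ι → ℝ} {T : ℝ}

lemma abs_sum_mul_sessLen_le (ht : ∀ j, 0 ≤ t j) (htT : ∀ j, t j ≤ T) (r : ℝ) {u : ℝ}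
    (hu : 0 ≤ u) (s : ℝ) :
    |∑ j, z j * r * sessLen (t j) s u| ≤ (∑ j, |z j|) * |r| * min u T :=
  calc |∑ j, z j * r * sessLen (t j) s u|
      ≤ ∑ j, |z j| * |r| * min u T := by
        refine (Finset.abs_sum_le_sum_abs _ _).trans (Finset.sum_le_sum fun j _ => ?_)
        rw [abs_mul, abs_mul, abs_of_nonneg (sessLen_nonneg _ _ _)]
        gcongr
        exact (sessLen_le_min (ht j) hu s).trans (min_le_min_left u (htT j))
    _ = (∑ j, |z j|) * |r| * min u T := by rw [Finset.sum_mul, Finset.sum_mul]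

lemma sum_mul_sessLen_eq_zero (htT : ∀ j, t j ≤ T) (r : ℝ) {s u : ℝ} (hs : s ∉ Icc (-u) T) :
    ∑ j, z j * r * sessLen (t j) s u = 0 :=
  Finset.sum_eq_zero fun j _ => by
    rw [sessLen_eq_zero_of_notMem fun h => hs ⟨h.1, h.2.trans (htT j)⟩, mul_zero]

lemma lintegral_Ioi_lintegral_min_sq_abs_sum_le {p : ℝ} (hp1 : 1 < p) (hp2 : p < 2)
    (ht : ∀ j, 0 ≤ t j) (hT : 0 ≤ T) (htT : ∀ j, t j ≤ T) {r : ℝ} (hr : 0 ≤ r) :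
    ∫⁻ u in Ioi (0 : ℝ),
        (∫⁻ s : ℝ, ENNReal.ofReal
            (min ((∑ j, z j * r * sessLen (t j) s u) ^ 2) |∑ j, z j * r * sessLen (t j) s u|))
          * ENNReal.ofReal (p * u ^ (-(p + 1))) ≤
      ENNReal.ofReal (2 * T * p * (1 / (2 - p) + 1 / (p - 1)) * ((∑ j, |z j|) * r) ^ p) := by
  set a := (∑ j, |z j|) * r
  have ha : 0 ≤ a := mul_nonneg (Finset.sum_nonneg fun j _ => abs_nonneg _) hr
  have hpoint : ∀ u ∈ Ioi (0 : ℝ),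
      (∫⁻ s : ℝ, ENNReal.ofReal
          (min ((∑ j, z j * r * sessLen (t j) s u) ^ 2) |∑ j, z j * r * sessLen (t j) s u|))
        * ENNReal.ofReal (p * u ^ (-(p + 1))) ≤
      ENNReal.ofReal (2 * T * p * a) * ENNReal.ofReal (min (a * u) 1 * u ^ (-p)) := by
    intro u (hu : 0 < u)
    have hs_bound := lintegral_min_sq_abs_le_of_abs_le
      (fun s => (abs_sum_mul_sessLen_le ht htT r hu.le s).trans_eq (by rw [abs_of_nonneg hr]))
      (fun s hs => sum_mul_sessLen_eq_zero (z := z) htT r hs)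
    have hrpow : u * u ^ (-(p + 1)) = u ^ (-p) := by
      rw [← Real.rpow_one_add' hu.le (by linarith)]
      congr 1
      ring
    calc _ ≤ ENNReal.ofReal (min ((a * min u T) ^ 2) (a * min u T) * (T - -u))
          * ENNReal.ofReal (p * u ^ (-(p + 1))) := by gcongr
      _ ≤ ENNReal.ofReal (2 * T * a * (min (a * u) 1 * u) * (p * u ^ (-(p + 1)))) := by
          rw [← ENNReal.ofReal_mul
            (mul_nonneg (le_min (sq_nonneg _) (mul_nonneg ha (le_min hu.le hT))) (by linarith))]
          refine ENNReal.ofReal_le_ofReal (mul_le_mul_of_nonneg_right ?_ (by positivity))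
          rw [sub_neg_eq_add, add_comm]
          exact min_sq_mul_add_le ha hu.le hT
      _ = _ := by
          rw [← ENNReal.ofReal_mul (by positivity), ← hrpow]
          congr 1
          ring
  calc _ ≤ ∫⁻ u in Ioi (0 : ℝ),
        ENNReal.ofReal (2 * T * p * a) * ENNReal.ofReal (min (a * u) 1 * u ^ (-p)) :=
        setLIntegral_mono' measurableSet_Ioi hpoint
    _ = ENNReal.ofReal (2 * T * p * a) *
          ENNReal.ofReal (a ^ (p - 1) * (1 / (2 - p) + 1 / (p - 1))) := by
        rw [lintegral_const_mul' _ _ ENNReal.ofReal_ne_top,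
          lintegral_Ioi_min_mul_one_mul_rpow ha hp1 hp2]
    _ = _ := by
        have hap : a ^ p = a * a ^ (p - 1) := by
          rw [← Real.rpow_one_add' ha (by linarith), add_sub_cancel]
        rw [← ENNReal.ofReal_mul (by positivity), hap]
        congr 1
        ring

end SessionSum

theorem min_sq_abs_integral_finite_moment_general
    (αD : ℝ) (h1 : 1 < αD) (h2 : αD < 2)
    (ν : Measure ℝ) (hν0 : ν (Iic 0) = 0)
    (hmom : (∫⁻ r, ENNReal.ofReal (r ^ αD) ∂ν) < ⊤)
    (m : ℕ) (z t : Fin m → ℝ) (ht : ∀ j, 0 ≤ t j) :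
    (∫⁻ r,
      (∫⁻ u in Ioi (0 : ℝ),
        (∫⁻ s : ℝ, ENNReal.ofReal
            (min ((∑ j, z j * r * sessLen (t j) s u) ^ 2)
                 |∑ j, z j * r * sessLen (t j) s u|))
          * ENNReal.ofReal (αD * u ^ (-(αD + 1)))) ∂ν) < ⊤ := by
  have hT : 0 ≤ ∑ j, t j := Finset.sum_nonneg fun j _ => ht j
  have htT : ∀ j, t j ≤ ∑ j, t j := fun j =>
    Finset.single_le_sum (fun i _ => ht i) (Finset.mem_univ j)
  have hZ : 0 ≤ ∑ j, |z j| := Finset.sum_nonneg fun j _ => abs_nonneg _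
  set c := 2 * (∑ j, t j) * αD * (1 / (2 - αD) + 1 / (αD - 1)) * (∑ j, |z j|) ^ αD with hc
  have hpos : ∀ᵐ r ∂ν, 0 < r :=
    (measure_eq_zero_iff_ae_notMem.1 hν0).mono fun r hr => not_le.1 hr
  calc _ ≤ ∫⁻ r, ENNReal.ofReal c * ENNReal.ofReal (r ^ αD) ∂ν := by
        refine lintegral_mono_ae (hpos.mono fun r hr => ?_)
        refine (lintegral_Ioi_lintegral_min_sq_abs_sum_le h1 h2 ht hT htT hr.le).trans_eq ?_
        rw [← ENNReal.ofReal_mul (by positivity), Real.mul_rpow hZ hr.le, hc]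
        congr 1
        ring
    _ = ENNReal.ofReal c * ∫⁻ r, ENNReal.ofReal (r ^ αD) ∂ν :=
        lintegral_const_mul' _ _ ENNReal.ofReal_ne_top
    _ < ⊤ := ENNReal.mul_lt_top ENNReal.ofReal_lt_top hmom

/-- For `1 < α_D < 2` and a probability measure `F_R` on `(0,∞)` with finite
`α_D`-moment, the integral of `min((Σ_j z_j r L_{t_j}(s,u))², |Σ_j z_j r L_{t_j}(s,u)|)`
with respect to `ds · α_D u^{−(α_D+1)} du · F_R(dr)` is finite. -/
theorem min_sq_abs_integral_finite_moment
    (αD : ℝ) (h1 : 1 < αD) (h2 : αD < 2)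
    (ν : Measure ℝ) (hν : IsProbabilityMeasure ν) (hν0 : ν (Iic 0) = 0)
    (hmom : (∫⁻ r, ENNReal.ofReal (r ^ αD) ∂ν) < ⊤)
    (m : ℕ) (hm : 1 ≤ m) (z t : Fin m → ℝ) (ht : ∀ j, 0 ≤ t j) :
    (∫⁻ r,
      (∫⁻ u in Ioi (0 : ℝ),
        (∫⁻ s : ℝ, ENNReal.ofReal
            (min ((∑ j, z j * r * sessLen (t j) s u) ^ 2)
                 |∑ j, z j * r * sessLen (t j) s u|))
          * ENNReal.ofReal (αD * u ^ (-(αD + 1)))) ∂ν) < ⊤ :=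
  min_sq_abs_integral_finite_moment_general αD h1 h2 ν hν0 hmom m z t ht
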